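/- For A ≥ B ≥ C ≥ 1 and m = ⌊(A+B+C-4)/2⌋, the multiplication maps U_r : R_r → R_{r+1} over ℤ are injective for all r ≤ m if and only if U_m is injective. -/

import Mathlib

open Matrix

/-- Monomials `x^i y^j z^k` of degree `s` nonzero in `ℤ[x,y,z]/(x^A,y^B,z^C)`. -/
def Mon (A B C s : ℕ) : Type :=
  {v : Fin A × Fin B × Fin C // (v.1 : ℕ) + (v.2.1 : ℕ) + (v.2.2 : ℕ) = s}

instance (A B C s : ℕ) : Fintype (Mon A B C s) := by unfold Mon; infer_instance
instance (A B C s : ℕ) : DecidableEq (Mon A B C s) := by unfold Mon; infer_instance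

/-- The matrix of multiplication by `x+y+z` in the monomial bases. -/
def Umat (A B C r : ℕ) : Matrix (Mon A B C (r+1)) (Mon A B C r) ℤ :=
  Matrix.of fun w v =>
    if (v.1.1 : ℕ) ≤ (w.1.1 : ℕ) ∧ (v.1.2.1 : ℕ) ≤ (w.1.2.1 : ℕ) ∧
        (v.1.2.2 : ℕ) ≤ (w.1.2.2 : ℕ) then (1 : ℤ) else 0

/-!
Over `ℚ`, `U_r` is injective iff its transpose is surjective, and the duality
`x^i y^j z^k ↦ x^(A-1-i) y^(B-1-j) z^(C-1-k)` of the monomial bases identifies `U_rᵀ` with `U_t`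
for `r + t + 4 = A + B + C`. Surjectivity of `U_t` propagates to `U_(t+1)`: every monomial of
degree `t + 2` is a variable times a monomial of degree `t + 1`, and multiplication by a variable
commutes with multiplication by `x + y + z`. Since `r ≤ m` makes the dual degree of `r` at least
that of `m`, injectivity of `U_m` gives injectivity of every `U_r`. Over `ℤ` and over its fraction
field `ℚ` injectivity is the same condition.
-/

open Function

theorem Fintype.sum_boole_mul_boole_eq_boole_exists {ι R : Type*} [Fintype ι] [Semiring R]
    (p q : ι → Prop) [DecidablePred p] [DecidablePred q]
    (h : ∀ i j, p i → q i → p j → q j → i = j) :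
    ∑ i, (if p i then (1 : R) else 0) * (if q i then 1 else 0) =
      if ∃ i, p i ∧ q i then 1 else 0 := by
  simp_rw [ite_zero_mul_ite_zero, mul_one]
  split_ifs with hex
  · obtain ⟨i, hi⟩ := hex
    rw [Fintype.sum_eq_single i fun j hj ↦ if_neg fun hj' ↦ hj (h _ _ hj'.1 hj'.2 hi.1 hi.2),
      if_pos hi]
  · exact Finset.sum_eq_zero fun i _ ↦ if_neg fun hi ↦ hex ⟨i, hi⟩

theorem Matrix.injective_mulVecLin_map_algebraMap_iff {m n R K : Type*} [Fintype n]
    [CommRing R] [IsDomain R] [Field K] [Algebra R K] [IsFractionRing R K] (M : Matrix m n R) :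
    Injective (M.map (algebraMap R K)).mulVecLin ↔ Injective M.mulVecLin := by
  have hf : LinearMap.ker (LinearMap.compLeft (Algebra.linearMap R K) m) = ⊥ :=
    LinearMap.ker_eq_bot.2 fun a b hab ↦ funext fun i ↦
      IsFractionRing.injective R K (congrFun hab i)
  rw [coe_mulVecLin, coe_mulVecLin, mulVec_injective_iff, mulVec_injective_iff,
    ← LinearIndependent.iff_fractionRing R K, ← LinearMap.linearIndependent_iff _ hf]
  rfl

theorem Matrix.injective_mulVecLin_iff_surjective_transpose {m n K : Type*} [Fintype m]
    [Fintype n] [Field K] (M : Matrix m n K) :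
    Injective M.mulVecLin ↔ Surjective Mᵀ.mulVecLin := by
  have rank_nullity := LinearMap.finrank_range_add_finrank_ker M.mulVecLin
  have rank_transpose : Module.finrank K (LinearMap.range Mᵀ.mulVecLin) =
      Module.finrank K (LinearMap.range M.mulVecLin) := M.rank_transpose
  rw [← LinearMap.ker_eq_bot, ← Submodule.finrank_eq_zero, ← LinearMap.range_eq_top]
  constructor
  · intro h
    exact Submodule.eq_top_of_finrank_eq (by omega)
  · intro h
    rw [h, finrank_top] at rank_transpose
    omega

theorem Matrix.surjective_mulVecLin_submatrix_iff {l m n o R : Type*} [Fintype n] [Fintype o]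
    [CommSemiring R] (M : Matrix m n R) (e₁ : l ≃ m) (e₂ : o ≃ n) :
    Surjective (M.submatrix e₁ e₂).mulVecLin ↔ Surjective M.mulVecLin := by
  rw [← e₁.symm_symm, ← e₂.symm_symm, ← reindex_apply, mulVecLin_reindex]
  simp only [LinearMap.coe_comp, LinearEquiv.coe_coe, EquivLike.comp_surjective,
    EquivLike.surjective_comp]

namespace Mon

variable {A B C s t : ℕ}

def ofCoords (i j k : ℕ) (hi : i < A) (hj : j < B) (hk : k < C) (h : i + j + k = s) :
    Mon A B C s :=
  ⟨(⟨i, hi⟩, ⟨j, hj⟩, ⟨k, hk⟩), h⟩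

section ofCoords

variable {i j k : ℕ} {hi : i < A} {hj : j < B} {hk : k < C} {h : i + j + k = s}

@[simp] theorem ofCoords_fst : ((ofCoords i j k hi hj hk h).1.1 : ℕ) = i := rfl
@[simp] theorem ofCoords_snd_fst : ((ofCoords i j k hi hj hk h).1.2.1 : ℕ) = j := rfl
@[simp] theorem ofCoords_snd_snd : ((ofCoords i j k hi hj hk h).1.2.2 : ℕ) = k := rfl

end ofCoords

@[ext] theorem ext {v w : Mon A B C s} (h₁ : (v.1.1 : ℕ) = w.1.1) (h₂ : (v.1.2.1 : ℕ) = w.1.2.1)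
    (h₃ : (v.1.2.2 : ℕ) = w.1.2.2) : v = w :=
  Subtype.ext (Prod.ext (Fin.ext h₁) (Prod.ext (Fin.ext h₂) (Fin.ext h₃)))

theorem coords_spec (v : Mon A B C s) :
    (v.1.1 : ℕ) < A ∧ (v.1.2.1 : ℕ) < B ∧ (v.1.2.2 : ℕ) < C ∧
      (v.1.1 : ℕ) + v.1.2.1 + v.1.2.2 = s :=
  ⟨v.1.1.isLt, v.1.2.1.isLt, v.1.2.2.isLt, v.2⟩

def exponent (v : Mon A B C s) : ℕ × ℕ × ℕ := (v.1.1, v.1.2.1, v.1.2.2)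

theorem exponent_injective : Injective (exponent : Mon A B C s → ℕ × ℕ × ℕ) :=
  fun _ _ h ↦ by simp only [exponent, Prod.mk.injEq] at h; exact Mon.ext h.1 h.2.1 h.2.2

theorem exists_exponent_eq_add_degree_one (w : Mon A B C (s + 1)) :
    ∃ (v : Mon A B C s) (e : Mon A B C 1), w.exponent = v.exponent + e.exponent := by
  obtain ⟨hA, hB, hC, hw⟩ := w.coords_spec
  simp only [exponent, Prod.mk_add_mk, Prod.mk.injEq]
  by_cases h₁ : 0 < (w.1.1 : ℕ)
  · exact ⟨ofCoords (w.1.1 - 1) w.1.2.1 w.1.2.2 (by omega) hB hC (by omega),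
      ofCoords 1 0 0 (by omega) (by omega) (by omega) rfl, by simp; omega⟩
  by_cases h₂ : 0 < (w.1.2.1 : ℕ)
  · exact ⟨ofCoords w.1.1 (w.1.2.1 - 1) w.1.2.2 hA (by omega) hC (by omega),
      ofCoords 0 1 0 (by omega) (by omega) (by omega) rfl, by simp; omega⟩
  · exact ⟨ofCoords w.1.1 w.1.2.1 (w.1.2.2 - 1) hA hB (by omega) (by omega),
      ofCoords 0 0 1 (by omega) (by omega) (by omega) rfl, by simp; omega⟩

def compl (h : s + t + 3 = A + B + C) (v : Mon A B C s) : Mon A B C t :=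
  have := v.coords_spec
  ofCoords (A - 1 - v.1.1) (B - 1 - v.1.2.1) (C - 1 - v.1.2.2) (by omega) (by omega) (by omega)
    (by omega)

def complEquiv (h : s + t + 3 = A + B + C) : Mon A B C s ≃ Mon A B C t where
  toFun := compl h
  invFun := compl (by omega)
  left_inv v := by
    have := v.coords_spec
    ext <;> simp only [compl, ofCoords_fst, ofCoords_snd_fst, ofCoords_snd_snd] <;> omega
  right_inv v := by
    have := v.coords_spec
    ext <;> simp only [compl, ofCoords_fst, ofCoords_snd_fst, ofCoords_snd_snd] <;> omega

end Mon

section Umat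

variable {A B C : ℕ}

theorem Umat_apply {r : ℕ} (w : Mon A B C (r + 1)) (v : Mon A B C r) :
    Umat A B C r w v = if v.exponent ≤ w.exponent then 1 else 0 := by
  simp only [Umat, of_apply, Mon.exponent, Prod.mk_le_mk]

theorem Umat_transpose {r t : ℕ} (h : r + t + 4 = A + B + C) :
    (Umat A B C r)ᵀ =
      (Umat A B C t).submatrix (Mon.complEquiv (by omega)) (Mon.complEquiv (by omega)) := by
  ext v w
  have := v.coords_spec
  have := w.coords_spec
  simp only [transpose_apply, submatrix_apply, Umat, of_apply, Mon.complEquiv, Equiv.coe_fn_mk,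
    Mon.compl, Mon.ofCoords_fst, Mon.ofCoords_snd_fst, Mon.ofCoords_snd_snd]
  exact if_congr (by omega) rfl rfl

theorem injective_Umat_iff_surjective {r t : ℕ} (h : r + t + 4 = A + B + C) :
    Injective (Umat A B C r).mulVecLin ↔
      Surjective ((Umat A B C t).map (Int.castRingHom ℚ)).mulVecLin := by
  rw [← injective_mulVecLin_map_algebraMap_iff (K := ℚ), algebraMap_int_eq,
    injective_mulVecLin_iff_surjective_transpose, ← transpose_map, Umat_transpose h,
    ← submatrix_map, surjective_mulVecLin_submatrix_iff]

def monomialMat (e : Mon A B C 1) (s : ℕ) : Matrix (Mon A B C (s + 1)) (Mon A B C s) ℤ :=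
  of fun w v ↦ if w.exponent = v.exponent + e.exponent then 1 else 0

theorem monomialMat_mul_Umat (e : Mon A B C 1) (s : ℕ) :
    monomialMat e (s + 1) * Umat A B C s = Umat A B C (s + 1) * monomialMat e s := by
  ext w v
  simp only [mul_apply, monomialMat, Umat_apply, of_apply]
  rw [Fintype.sum_boole_mul_boole_eq_boole_exists _ _ fun u u' hu _ hu' _ ↦
      Mon.exponent_injective (add_right_cancel (hu.symm.trans hu')),
    Fintype.sum_boole_mul_boole_eq_boole_exists _ _ fun u u' _ hu _ hu' ↦
      Mon.exponent_injective (hu.trans hu'.symm)]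
  obtain ⟨-, -, -, hw⟩ := w.coords_spec
  obtain ⟨-, -, -, hv⟩ := v.coords_spec
  obtain ⟨-, -, -, he⟩ := e.coords_spec
  refine if_congr ⟨fun ⟨u, hwu, hvu⟩ ↦ ?_, fun ⟨u, huw, hu⟩ ↦ ?_⟩ rfl rfl
  · obtain ⟨hA, hB, hC, -⟩ := u.coords_spec
    simp only [Mon.exponent, Prod.mk_add_mk, Prod.mk_le_mk, Prod.mk.injEq] at hwu hvu ⊢
    exact ⟨Mon.ofCoords (v.1.1 + e.1.1) (v.1.2.1 + e.1.2.1) (v.1.2.2 + e.1.2.2)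
      (by omega) (by omega) (by omega) (by omega), by simp; omega⟩
  · obtain ⟨hA, hB, hC, -⟩ := u.coords_spec
    simp only [Mon.exponent, Prod.mk_add_mk, Prod.mk_le_mk, Prod.mk.injEq] at huw hu ⊢
    exact ⟨Mon.ofCoords (w.1.1 - e.1.1) (w.1.2.1 - e.1.2.1) (w.1.2.2 - e.1.2.2)
      (by omega) (by omega) (by omega) (by omega), by simp; omega⟩

theorem monomialMat_col {R : Type*} [Ring R] {s : ℕ} {e : Mon A B C 1} {v : Mon A B C s}
    {w : Mon A B C (s + 1)} (h : w.exponent = v.exponent + e.exponent) :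
    ((monomialMat e s).map (Int.castRingHom R)).col v = Pi.single w 1 := by
  funext w'
  simp only [col_apply, map_apply, monomialMat, of_apply, eq_intCast, Int.cast_ite, Int.cast_one,
    Int.cast_zero, Pi.single_apply, ← h]
  exact if_congr ⟨fun h' ↦ Mon.exponent_injective h', congrArg _⟩ rfl rfl

variable {R : Type*} [CommRing R]

theorem surjective_Umat_succ {s : ℕ}
    (h : Surjective ((Umat A B C s).map (Int.castRingHom R)).mulVecLin) :
    Surjective ((Umat A B C (s + 1)).map (Int.castRingHom R)).mulVecLin := by
  rw [← LinearMap.range_eq_top, eq_top_iff, ← (Pi.basisFun R _).span_eq, Submodule.span_le]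
  rintro _ ⟨w, rfl⟩
  obtain ⟨v, e, hw⟩ := w.exists_exponent_eq_add_degree_one
  obtain ⟨u, hu⟩ := h (Pi.single v 1)
  refine ⟨(monomialMat e s).map (Int.castRingHom R) *ᵥ u, ?_⟩
  rw [mulVecLin_apply] at hu
  rw [Pi.basisFun_apply, mulVecLin_apply, mulVec_mulVec, ← Matrix.map_mul,
    ← monomialMat_mul_Umat, Matrix.map_mul, ← mulVec_mulVec, hu, mulVec_single_one,
    monomialMat_col hw]

theorem surjective_Umat_of_le {s t : ℕ} (hst : s ≤ t)
    (h : Surjective ((Umat A B C s).map (Int.castRingHom R)).mulVecLin) :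
    Surjective ((Umat A B C t).map (Int.castRingHom R)).mulVecLin := by
  induction t, hst using Nat.le_induction with
  | base => exact h
  | succ t _ ih => exact surjective_Umat_succ ih

end Umat

theorem stmt3 (A B C : ℕ)
    (m : ℕ) (hm : m = (A + B + C - 4) / 2) :
    (∀ r ≤ m, Function.Injective (Umat A B C r).mulVecLin)
      ↔ Function.Injective (Umat A B C m).mulVecLin := by
  refine ⟨fun h ↦ h m le_rfl, fun h r hr ↦ ?_⟩
  obtain rfl | hlt := hr.eq_or_lt
  · exact h
  rw [injective_Umat_iff_surjective (t := A + B + C - 4 - m) (by omega)] at h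
  rw [injective_Umat_iff_surjective (t := A + B + C - 4 - r) (by omega)]
  exact surjective_Umat_of_le (by omega) h
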